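/- Let A be an n-dimensional evolution algebra over a field F of characteristic ≠ 2 with natural basis e_1, …, e_n, fourth power-associative (x²·x² = (x²·x)·x for all x) and not nil. Then there is an index i₀ with e_{i₀}³ ≠ 0; writing e_{i₀}² = Σ_k a_{i₀k} e_k, one has a_{i₀i₀} ≠ 0, the element e = a_{i₀i₀}^{-2}·e_{i₀}² is a nonzero idempotent (e·e = e), e·e_j = 0 for all j ≠ i₀, and the family obtained from (e_1, …, e_n) by replacing e_{i₀} with e is again a natural basis of A. -/

import Mathlib

/-!
Write `u = eᵢ²`, `v = eⱼ²` and `α, β, γ, δ` for the coordinates of `u, v` at `i, j`. Fourth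
power-associativity at `eᵢ + t • eⱼ` is a cubic identity in `t` with coefficients in
`span {u, v}`. Its values at `t = ±1` show that if every `aᵢᵢ` vanishes, then all products
`eᵢ² · eⱼ²` vanish, hence `x² · x² = 0` and `x⁴ = (x² · x) · x = x² · x² = 0`: the algebra is nil.
So some `α = a_{i₀i₀}` is nonzero, and `u · e_{i₀} = α • u` gives `u · u = α² • u`, making
`α⁻² • u` idempotent. For `j ≠ i₀` the odd part of the identity forces `β • v = u · eⱼ = 0`
unless `γ = -α` and `δ = -β`; that case is refuted by a third value of `t` or, over `𝔽₃` where
there is none, by the test element `e_{i₀} + u - v`. Finally `α⁻² • u` has `i₀`-coordinate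
`α⁻¹ ≠ 0`, so it can replace `e_{i₀}` in the basis.
-/

/-- Principal powers: `ppow m a k = a^(k+1)`. -/
def ppow {F A : Type*} [Field F] [AddCommGroup A] [Module F A]
    (m : A →ₗ[F] A →ₗ[F] A) (a : A) : ℕ → A
  | 0 => a
  | k + 1 => m (ppow m a k) a

section Defs

variable {ι R A : Type*} [CommRing R] [AddCommGroup A] [Module R A]

def IsNaturalBasis (m : A →ₗ[R] A →ₗ[R] A) (e : Module.Basis ι R A) : Prop :=
  ∀ i j, i ≠ j → m (e i) (e j) = 0

def IsFourthPowerAssoc (m : A →ₗ[R] A →ₗ[R] A) : Prop :=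
  ∀ x, m (m x x) (m x x) = m (m (m x x) x) x

end Defs

section CommRing

variable {ι R A : Type*} [CommRing R] [AddCommGroup A] [Module R A] {m : A →ₗ[R] A →ₗ[R] A}

theorem IsNaturalBasis.mul_basis [Fintype ι] {e : Module.Basis ι R A} (he : IsNaturalBasis m e)
    (w : A) (j : ι) : m w (e j) = e.repr w j • m (e j) (e j) := by
  conv_lhs => rw [← e.sum_repr w]
  rw [map_sum, LinearMap.sum_apply, Finset.sum_eq_single j]
  · rw [map_smul, LinearMap.smul_apply]
  · intro k _ hk
    rw [map_smul, LinearMap.smul_apply, he k j hk, smul_zero]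
  · exact absurd (Finset.mem_univ j)

theorem IsNaturalBasis.mul_self [Fintype ι] {e : Module.Basis ι R A} (he : IsNaturalBasis m e)
    (w : A) : m w w = ∑ k, (e.repr w k ^ 2) • m (e k) (e k) := by
  nth_rw 2 [← e.sum_repr w]
  simp only [map_sum, map_smul]
  refine Finset.sum_congr rfl fun k _ => ?_
  rw [he.mul_basis, smul_smul, sq]

theorem IsFourthPowerAssoc.sq_mul_sq {x : A} {a : R} (hpa : IsFourthPowerAssoc m)
    (h : m (m x x) x = a • m x x) : m (m x x) (m x x) = a ^ 2 • m x x := by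
  rw [hpa x, h, map_smul, LinearMap.smul_apply, h, smul_smul, sq]

/-- The defect of fourth power-associativity at `p + t • q`, sorted by powers of `t`. -/
theorem IsFourthPowerAssoc.add_smul_identity (hcomm : ∀ x y, m x y = m y x)
    (hpa : IsFourthPowerAssoc m) {p q : A} {α β γ δ : R} (hpq : m p q = 0)
    (hup : m (m p p) p = α • m p p) (huq : m (m p p) q = β • m q q)
    (hvp : m (m q q) p = γ • m p p) (hvq : m (m q q) q = δ • m q q) (t : R) :
    t • ((β * γ) • m p p + (α * β) • m q q)
      + t ^ 2 • ((α * γ) • m p p + (β * δ) • m q q - (2 : R) • m (m p p) (m q q))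
      + t ^ 3 • ((γ * δ) • m p p + (β * γ) • m q q) = 0 := by
  have huu := hpa.sq_mul_sq hup
  have hvv := hpa.sq_mul_sq hvq
  have hx2 : m (p + t • q) (p + t • q) = m p p + t ^ 2 • m q q := by
    simp only [map_add, map_smul, LinearMap.add_apply, LinearMap.smul_apply, hpq, hcomm q p]
    module
  have hx4 := hpa (p + t • q)
  rw [hx2] at hx4
  simp only [map_add, map_smul, LinearMap.add_apply, LinearMap.smul_apply, hup, huq, hvp, hvq,
    huu, hvv, hcomm (m q q) (m p p)] at hx4
  linear_combination (norm := module) -hx4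

theorem IsFourthPowerAssoc.smul_eq_smul_of_three_eq_zero (hcomm : ∀ x y, m x y = m y x)
    (hpa : IsFourthPowerAssoc m) (h3 : (3 : R) = 0) {x u v : A} {α : R} (hα : α ^ 2 = 1)
    (hxx : m x x = u) (hux : m u x = α • u) (hvx : m v x = -α • u) (huu : m u u = u)
    (hvv : m v v = v) (huv : m u v = u + v) : (1 + α) • u = (1 - α) • v := by
  have h := hpa (x + u - v)
  simp only [map_add, map_sub, map_smul, LinearMap.add_apply, LinearMap.sub_apply,
    LinearMap.smul_apply, hxx, hux, hvx, huu, hvv, huv, hcomm x u, hcomm x v, hcomm v u] at h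
  -- the defect at `x + u - v`, reduced by `α ^ 2 = 1` and `3 = 0`
  linear_combination (norm := module) -h + ((11 - 4 * α) * hα) • u + (4 * hα) • v
    + ((4 - 2 * α) * h3) • u + ((1 - 2 * α) * h3) • v

end CommRing

section Field

variable {ι F A : Type*} [Field F] [AddCommGroup A] [Module F A] {m : A →ₗ[F] A →ₗ[F] A}
  {e : Module.Basis ι F A}

theorem IsFourthPowerAssoc.two_smul_sq_mul_sq (hcomm : ∀ x y, m x y = m y x)
    (hpa : IsFourthPowerAssoc m) (h2 : (2 : F) ≠ 0) {p q : A} {α β γ δ : F} (hpq : m p q = 0)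
    (hup : m (m p p) p = α • m p p) (huq : m (m p p) q = β • m q q)
    (hvp : m (m q q) p = γ • m p p) (hvq : m (m q q) q = δ • m q q) :
    (2 : F) • m (m p p) (m q q) = (α * γ) • m p p + (β * δ) • m q q := by
  have h_one := hpa.add_smul_identity hcomm hpq hup huq hvp hvq 1
  have h_neg_one := hpa.add_smul_identity hcomm hpq hup huq hvp hvq (-1)
  have h : (2 : F) • ((α * γ) • m p p + (β * δ) • m q q - (2 : F) • m (m p p) (m q q)) = 0 := by
    linear_combination (norm := module) h_one + h_neg_one
  rw [smul_eq_zero_iff_right h2, sub_eq_zero] at h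
  exact h.symm

theorem IsFourthPowerAssoc.smul_sq_add_smul_sq_eq_zero (hcomm : ∀ x y, m x y = m y x)
    (hpa : IsFourthPowerAssoc m) (h2 : (2 : F) ≠ 0) {p q : A} {α β γ δ : F} (hpq : m p q = 0)
    (hup : m (m p p) p = α • m p p) (huq : m (m p p) q = β • m q q)
    (hvp : m (m q q) p = γ • m p p) (hvq : m (m q q) q = δ • m q q) :
    (γ * (β + δ)) • m p p + (β * (α + γ)) • m q q = 0 := by
  have h_one := hpa.add_smul_identity hcomm hpq hup huq hvp hvq 1
  have h_neg_one := hpa.add_smul_identity hcomm hpq hup huq hvp hvq (-1)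
  have h : (2 : F) • ((γ * (β + δ)) • m p p + (β * (α + γ)) • m q q) = 0 := by
    linear_combination (norm := module) h_one - h_neg_one
  rwa [smul_eq_zero_iff_right h2] at h

theorem add_eq_zero_and_add_eq_zero_of_mul_add {α β γ δ : F} (h2 : (2 : F) ≠ 0) (hα : α ≠ 0)
    (hβ : β ≠ 0) (h₁ : α * (β + δ) + β * (α + γ) = 0) (h₂ : γ * (β + δ) + δ * (α + γ) = 0) :
    α + γ = 0 ∧ β + δ = 0 := by
  have hprod : γ * δ = α * β := by
    have h : (2 : F) * (γ * δ - α * β) = 0 := by linear_combination h₂ - h₁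
    linear_combination (mul_eq_zero.mp h).resolve_left h2
  have h : (α * β) * ((α + γ) * (β + δ)) = 0 := by
    linear_combination (α * β) * h₁ + (α * β) * hprod
  rcases mul_eq_zero.mp ((mul_eq_zero.mp h).resolve_left (mul_ne_zero hα hβ)) with hs | hr
  · refine ⟨hs, ?_⟩
    rw [hs, mul_zero, add_zero] at h₁
    exact (mul_eq_zero.mp h₁).resolve_left hα
  · refine ⟨?_, hr⟩
    rw [hr, mul_zero, zero_add] at h₁
    exact (mul_eq_zero.mp h₁).resolve_left hβ

theorem IsFourthPowerAssoc.eq_zero_of_sq_mul_eq_neg (hcomm : ∀ x y, m x y = m y x)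
    (hpa : IsFourthPowerAssoc m) (h2 : (2 : F) ≠ 0) {p q : A} {α β : F} (f : A →ₗ[F] F)
    (hα : α ≠ 0) (hfu : f (m p p) = α) (hfv : f (m q q) = -α) (hpq : m p q = 0)
    (hup : m (m p p) p = α • m p p) (huq : m (m p p) q = β • m q q)
    (hvp : m (m q q) p = -α • m p p) (hvq : m (m q q) q = -β • m q q) : β = 0 := by
  by_contra hβ
  have heven := hpa.two_smul_sq_mul_sq hcomm h2 hpq hup huq hvp hvq
  suffices (2 : F) * α = 0 from hα ((mul_eq_zero.mp this).resolve_left h2)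
  by_cases hF : ∃ c : F, c ^ 3 ≠ c
  · obtain ⟨c, hc⟩ := hF
    have h := hpa.add_smul_identity hcomm hpq hup huq hvp hvq c
    have huv : ((c ^ 3 - c) * (α * β)) • (m p p - m q q) = 0 := by
      linear_combination (norm := module) h + c ^ 2 • heven
    rw [smul_eq_zero_iff_right (mul_ne_zero (sub_ne_zero.mpr hc) (mul_ne_zero hα hβ)),
      sub_eq_zero] at huv
    have hf := congrArg f huv
    rw [hfu, hfv] at hf
    linear_combination hf
  · push Not at hF
    -- `F = 𝔽₃` has no third value of `t`; the test element `p + p² - q²` takes its place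
    have h3 : (3 : F) = 0 := by
      have h : (2 : F) * 3 = 0 := by linear_combination hF 2
      exact (mul_eq_zero.mp h).resolve_left h2
    have hsq : ∀ c : F, c ≠ 0 → c ^ 2 = 1 := fun c hc ↦ by
      have h : c * (c ^ 2 - 1) = 0 := by linear_combination hF c
      exact sub_eq_zero.mp ((mul_eq_zero.mp h).resolve_left hc)
    have huu : m (m p p) (m p p) = m p p := by
      rw [hpa.sq_mul_sq hup, hsq α hα, one_smul]
    have hvv : m (m q q) (m q q) = m q q := by
      rw [hpa.sq_mul_sq hvq, hsq (-β) (neg_ne_zero.mpr hβ), one_smul]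
    have huv : m (m p p) (m q q) = m p p + m q q := by
      linear_combination (norm := module) -heven + h3 • m (m p p) (m q q)
        + (hsq α hα) • m p p + (hsq β hβ) • m q q
    have h := hpa.smul_eq_smul_of_three_eq_zero hcomm h3 (hsq α hα) rfl hup hvp huu hvv huv
    have hf := congrArg f h
    rw [map_smul, map_smul, hfu, hfv, smul_eq_mul, smul_eq_mul] at hf
    linear_combination hf

theorem IsNaturalBasis.update [DecidableEq ι] (hcomm : ∀ x y, m x y = m y x)
    (he : IsNaturalBasis m e) {b : Module.Basis ι F A} {i : ι} {w : A}
    (hb : ⇑b = Function.update e i w) (hw : ∀ j, j ≠ i → m w (e j) = 0) :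
    IsNaturalBasis m b := by
  intro j k hjk
  rw [hb]
  rcases eq_or_ne j i with rfl | hj
  · rw [Function.update_self, Function.update_of_ne hjk.symm]
    exact hw k hjk.symm
  rcases eq_or_ne k i with rfl | hk
  · rw [Function.update_self, Function.update_of_ne hj, hcomm]
    exact hw j hj
  rw [Function.update_of_ne hj, Function.update_of_ne hk]
  exact he j k hjk

variable [Fintype ι]

theorem IsNaturalBasis.ppow_three_eq_zero (hcomm : ∀ x y, m x y = m y x)
    (he : IsNaturalBasis m e) (hpa : IsFourthPowerAssoc m) (h2 : (2 : F) ≠ 0)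
    (hdiag : ∀ i, e.repr (m (e i) (e i)) i = 0) (a : A) : ppow m a 3 = 0 := by
  have hsq (i j : ι) : m (m (e i) (e i)) (m (e j) (e j)) = 0 := by
    rcases eq_or_ne i j with rfl | hij
    · rw [hpa.sq_mul_sq (he.mul_basis _ i), hdiag, zero_pow two_ne_zero, zero_smul]
    · have h := hpa.two_smul_sq_mul_sq hcomm h2 (he i j hij) (he.mul_basis _ i) (he.mul_basis _ j)
        (he.mul_basis _ i) (he.mul_basis _ j)
      rwa [hdiag, hdiag, zero_mul, mul_zero, zero_smul, zero_smul, add_zero,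
        smul_eq_zero_iff_right h2] at h
  have ha4 : m (m a a) (m a a) = 0 := by
    simp only [he.mul_self a, map_sum, map_smul, LinearMap.sum_apply, LinearMap.smul_apply, hsq,
      smul_zero, Finset.sum_const_zero]
  change m (m (m a a) a) a = 0
  rw [← hpa a, ha4]

theorem IsNaturalBasis.sq_mul_basis_eq_zero (hcomm : ∀ x y, m x y = m y x)
    (he : IsNaturalBasis m e) (hpa : IsFourthPowerAssoc m) (h2 : (2 : F) ≠ 0) {i j : ι}
    (hij : i ≠ j) (hα : e.repr (m (e i) (e i)) i ≠ 0) : m (m (e i) (e i)) (e j) = 0 := by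
  set u := m (e i) (e i)
  set v := m (e j) (e j)
  set α := e.repr u i
  set β := e.repr u j
  set γ := e.repr v i
  set δ := e.repr v j
  have hup : m u (e i) = α • u := he.mul_basis u i
  have huq : m u (e j) = β • v := he.mul_basis u j
  have hvp : m v (e i) = γ • u := he.mul_basis v i
  have hvq : m v (e j) = δ • v := he.mul_basis v j
  rw [huq]
  rcases eq_or_ne β 0 with hβ | hβ
  · rw [hβ, zero_smul]
  have hodd := hpa.smul_sq_add_smul_sq_eq_zero hcomm h2 (he i j hij) hup huq hvp hvq
  rcases eq_or_ne γ 0 with hγ | hγ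
  · rw [hγ, zero_mul, zero_smul, zero_add, add_zero, mul_comm, ← smul_smul] at hodd
    exact (smul_eq_zero.mp hodd).resolve_left hα
  have hi : γ * (α * (β + δ) + β * (α + γ)) = 0 := by
    have h : γ * (β + δ) * α + β * (α + γ) * γ = 0 := by simpa using congrArg (e.coord i) hodd
    linear_combination h
  have hj : β * (γ * (β + δ) + δ * (α + γ)) = 0 := by
    have h : γ * (β + δ) * β + β * (α + γ) * δ = 0 := by simpa using congrArg (e.coord j) hodd
    linear_combination h
  obtain ⟨hs, hr⟩ := add_eq_zero_and_add_eq_zero_of_mul_add h2 hα hβ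
    ((mul_eq_zero.mp hi).resolve_left hγ) ((mul_eq_zero.mp hj).resolve_left hβ)
  have hγα : γ = -α := eq_neg_of_add_eq_zero_right hs
  have hδβ : δ = -β := eq_neg_of_add_eq_zero_right hr
  rw [hγα] at hvp
  rw [hδβ] at hvq
  exact absurd (hpa.eq_zero_of_sq_mul_eq_neg hcomm h2 (e.coord i) hα rfl hγα (he i j hij)
    hup huq hvp hvq) hβ

end Field

theorem Module.Basis.exists_coe_eq_update {ι K V : Type*} [Fintype ι] [DecidableEq ι] [Field K]
    [AddCommGroup V] [Module K V] (e : Module.Basis ι K V) {i : ι} {w : V}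
    (hw : e.repr w i ≠ 0) : ∃ b : Module.Basis ι K V, ⇑b = Function.update e i w := by
  have : FiniteDimensional K V := .of_basis e
  have hli : LinearIndependent K (Function.update e i w) :=
    e.linearIndependent.update i w
      ⟨1, one_mem _, e.repr w, mem_nonZeroDivisors_of_ne_zero hw,
        by rw [one_smul, e.linearCombination_repr]⟩
  exact ⟨basisOfLinearIndependentOfCardEqFinrank' _ hli (Module.finrank_eq_card_basis e).symm,
    coe_basisOfLinearIndependentOfCardEqFinrank' _ _ _⟩

theorem inv_sq_smul_mul_self {F A : Type*} [Field F] [AddCommGroup A] [Module F A]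
    {m : A →ₗ[F] A →ₗ[F] A} {u : A} {a : F} (ha : a ≠ 0) (hu : m u u = a ^ 2 • u) :
    m ((a ^ 2)⁻¹ • u) ((a ^ 2)⁻¹ • u) = (a ^ 2)⁻¹ • u := by
  simp only [map_smul, LinearMap.smul_apply, hu, smul_smul]
  rw [inv_mul_cancel₀ (pow_ne_zero 2 ha), mul_one]

/-- a fourth power-associative evolution algebra which is not nil has a
basis vector `e_{i₀}` with `e_{i₀}³ ≠ 0`; then `a_{i₀ i₀} ≠ 0`,
`e = a_{i₀ i₀}⁻² • e_{i₀}²` is a nonzero idempotent satisfying `e·eⱼ = 0` for `j ≠ i₀`,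
and replacing `e_{i₀}` by `e` yields again a natural basis. -/
theorem fourth_pa_evolution_algebra_idempotent_extension
    (F : Type*) [Field F] (h2 : (2 : F) ≠ 0)
    (A : Type*) [AddCommGroup A] [Module F A]
    (m : A →ₗ[F] A →ₗ[F] A) (hcomm : ∀ x y : A, m x y = m y x)
    (n : ℕ) (e : Module.Basis (Fin n) F A)
    (hnat : ∀ i j : Fin n, i ≠ j → m (e i) (e j) = 0)
    (hpa4 : ∀ x : A, m (m x x) (m x x) = m (m (m x x) x) x)
    (hnotnil : ¬ ∀ a : A, ∃ k : ℕ, ppow m a k = 0) :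
    ∃ i₀ : Fin n, ppow m (e i₀) 2 ≠ 0 ∧
      e.repr (m (e i₀) (e i₀)) i₀ ≠ 0 ∧
      ((e.repr (m (e i₀) (e i₀)) i₀ ^ 2)⁻¹ • m (e i₀) (e i₀) ≠ 0) ∧
      (m ((e.repr (m (e i₀) (e i₀)) i₀ ^ 2)⁻¹ • m (e i₀) (e i₀))
         ((e.repr (m (e i₀) (e i₀)) i₀ ^ 2)⁻¹ • m (e i₀) (e i₀)) =
        (e.repr (m (e i₀) (e i₀)) i₀ ^ 2)⁻¹ • m (e i₀) (e i₀)) ∧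
      (∀ j : Fin n, j ≠ i₀ →
        m ((e.repr (m (e i₀) (e i₀)) i₀ ^ 2)⁻¹ • m (e i₀) (e i₀)) (e j) = 0) ∧
      ∃ b : Module.Basis (Fin n) F A,
        ⇑b = Function.update (⇑e) i₀
          ((e.repr (m (e i₀) (e i₀)) i₀ ^ 2)⁻¹ • m (e i₀) (e i₀)) ∧
        ∀ i j : Fin n, i ≠ j → m (b i) (b j) = 0 := by
  have he : IsNaturalBasis m e := hnat
  have hpa : IsFourthPowerAssoc m := hpa4
  obtain ⟨i₀, hα⟩ : ∃ i, e.repr (m (e i) (e i)) i ≠ 0 := by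
    by_contra! hdiag
    exact hnotnil fun a ↦ ⟨3, he.ppow_three_eq_zero hcomm hpa h2 hdiag a⟩
  set u := m (e i₀) (e i₀)
  set α := e.repr u i₀
  have hup : m u (e i₀) = α • u := he.mul_basis u i₀
  have hu : u ≠ 0 := fun h ↦ hα (by simp [α, h])
  have hidem := inv_sq_smul_mul_self hα (hpa.sq_mul_sq hup)
  have horth (j : Fin n) (hj : j ≠ i₀) : m ((α ^ 2)⁻¹ • u) (e j) = 0 := by
    rw [map_smul, LinearMap.smul_apply, he.sq_mul_basis_eq_zero hcomm hpa h2 hj.symm hα, smul_zero]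
  obtain ⟨b, hb⟩ := e.exists_coe_eq_update (i := i₀) (w := (α ^ 2)⁻¹ • u) (by
    rw [map_smul, Finsupp.smul_apply, smul_eq_mul]
    exact mul_ne_zero (inv_ne_zero (pow_ne_zero 2 hα)) hα)
  refine ⟨i₀, ?_, hα, smul_ne_zero (inv_ne_zero (pow_ne_zero 2 hα)) hu, hidem, horth, b, hb,
    he.update hcomm hb horth⟩
  change m u (e i₀) ≠ 0
  rw [hup]
  exact smul_ne_zero hα hu
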